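/- For a positive integer t, let ℓ_t(x,y,z) = x² + xy + y² + 3t·z², L_t(x,y,z) = x² + xy + 7y² + 3t·z², M_t(x,y,z) = x² + 7y² + (3t+1)z² + 5yz + zx + xy, N_t(x,y,z) = 3x² + 3y² + (3t+1)z² + 3yz + 3xy, and K_t(x,y,z) = x² + xy + y² + 27t·z². Then for every positive integer t and every positive integer n: r(3n+1, ℓ_t) = 3·r(3n+1, L_t) = 3·r(3n+1, M_t) = 2·r(3n+1, N_t) + r(3n+1, K_t). -/

import Mathlib

open Matrix

noncomputable section

/-- A ternary quadratic form `a·x² + b·y² + c·z² + d·yz + e·zx + g·xy`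
with integer coefficients. -/
structure TernaryQF where
  a : ℤ
  b : ℤ
  c : ℤ
  d : ℤ
  e : ℤ
  g : ℤ
deriving DecidableEq

namespace TernaryQF

/-- Evaluation of the form in any commutative ring. -/
def evalR {R : Type*} [CommRing R] (f : TernaryQF) (x y z : R) : R :=
  (f.a : R) * x ^ 2 + (f.b : R) * y ^ 2 + (f.c : R) * z ^ 2 +
    (f.d : R) * (y * z) + (f.e : R) * (z * x) + (f.g : R) * (x * y)

def eval (f : TernaryQF) (x y z : ℤ) : ℤ := f.evalR x y z

def evalVec (f : TernaryQF) (v : Fin 3 → ℤ) : ℤ := f.eval (v 0) (v 1) (v 2)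

/-- Non-classic integral: the coefficients are coprime. -/
def NonClassic (f : TernaryQF) : Prop :=
  Nat.gcd f.a.natAbs (Nat.gcd f.b.natAbs (Nat.gcd f.c.natAbs
    (Nat.gcd f.d.natAbs (Nat.gcd f.e.natAbs f.g.natAbs)))) = 1

/-- Positive definiteness (equivalent, for a rational symmetric matrix, to
positivity of the Gram matrix). -/
def PosDefn (f : TernaryQF) : Prop :=
  ∀ x y z : ℤ, ¬(x = 0 ∧ y = 0 ∧ z = 0) → 0 < f.eval x y z

/-- `r n f`: the number of representations of `n` by `f`. -/
def r (f : TernaryQF) (n : ℤ) : ℕ :=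
  Set.ncard {v : Fin 3 → ℤ | f.evalVec v = n}

/-- `4·df`, four times the discriminant (determinant of the Gram matrix), an integer. -/
def disc4 (f : TernaryQF) : ℤ :=
  4 * f.a * f.b * f.c + f.g * f.d * f.e - f.a * f.d ^ 2 - f.b * f.e ^ 2 - f.c * f.g ^ 2

/-- `h_p(df, λ) = (p^{λ+1}-1)/(p-1) - (−4df/p)·(p^{λ}-1)/(p-1)`, written via geometric sums. -/
def hFactor (f : TernaryQF) (p lam : ℕ) : ℤ :=
  (∑ i ∈ Finset.range (lam + 1), (p : ℤ) ^ i) -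
    jacobiSym (-f.disc4) p * ∑ i ∈ Finset.range lam, (p : ℤ) ^ i

/-- A (positive definite non-classic integral) ternary form is strongly s-regular if it
represents a nonzero square and the representation numbers of squares satisfy the
multiplicative formula of Cooper–Lam type. -/
def StronglySRegular (f : TernaryQF) : Prop :=
  (∃ n : ℕ, 0 < n ∧ f.r ((n : ℤ) ^ 2) ≠ 0) ∧
    ∀ n₁ n₂ : ℕ, 0 < n₁ → 0 < n₂ →
      (∀ p : ℕ, p.Prime → p ∣ n₁ → p = 2 ∨ (p : ℤ) ∣ f.disc4) →
      Odd n₂ → IsCoprime (n₂ : ℤ) f.disc4 →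
      (f.r ((n₁ : ℤ) ^ 2 * (n₂ : ℤ) ^ 2) : ℤ) =
        (f.r ((n₁ : ℤ) ^ 2) : ℤ) *
          ∏ p ∈ n₂.primeFactors, f.hFactor p (n₂.factorization p)

/-- `m_s(f)`: the minimal positive integer whose square is represented by `f`. -/
def msf (f : TernaryQF) : ℕ := sInf {n : ℕ | 0 < n ∧ f.r ((n : ℤ) ^ 2) ≠ 0}

/-- The (rational) Gram matrix of the form. -/
def gram (f : TernaryQF) : Matrix (Fin 3) (Fin 3) ℚ :=
  !![(f.a : ℚ), (f.g : ℚ) / 2, (f.e : ℚ) / 2;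
     (f.g : ℚ) / 2, (f.b : ℚ), (f.d : ℚ) / 2;
     (f.e : ℚ) / 2, (f.d : ℚ) / 2, (f.c : ℚ)]

/-- Equivalence of ternary forms over ℤ. -/
def TEquiv (f g : TernaryQF) : Prop :=
  ∃ U : Matrix (Fin 3) (Fin 3) ℤ, IsUnit U.det ∧
    (U.map ((↑) : ℤ → ℚ)).transpose * f.gram * U.map ((↑) : ℤ → ℚ) = g.gram

/-- The Gram matrix viewed over `ℚ_p`. -/
def gramPadic (p : ℕ) [Fact p.Prime] (f : TernaryQF) : Matrix (Fin 3) (Fin 3) ℚ_[p] :=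
  f.gram.map (fun x : ℚ => (x : ℚ_[p]))

/-- The coercion `ℤ_p → ℚ_p`. -/
def coeQp {p : ℕ} [Fact p.Prime] (x : ℤ_[p]) : ℚ_[p] := x

/-- Two matrices over `ℚ_p` are equivalent over `ℤ_p` if `Uᵀ A U = B` for some
`U ∈ GL₃(ℤ_p)`. -/
def EquivZp (p : ℕ) [Fact p.Prime] (A B : Matrix (Fin 3) (Fin 3) ℚ_[p]) : Prop :=
  ∃ U : Matrix (Fin 3) (Fin 3) ℤ_[p], IsUnit U.det ∧
    (U.map coeQp).transpose * A * U.map coeQp = B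

/-- Two forms lie in the same genus: locally equivalent at every (finite) prime. -/
def SameGenus (f g : TernaryQF) : Prop :=
  ∀ (p : ℕ) [Fact p.Prime], EquivZp p (gramPadic p f) (gramPadic p g)

/-- `Λ_p(f) = {v ∈ ℤ³ : f(v+z) ≡ f(z) (mod p) for all z ∈ ℤ³}`. -/
def Lam (p : ℕ) (f : TernaryQF) : Set (Fin 3 → ℤ) :=
  {v | ∀ z : Fin 3 → ℤ, (p : ℤ) ∣ (f.evalVec (v + z) - f.evalVec z)}

/-- `g` is a Watson `λ_p`-transform of `f`: `g` is obtained by expressing `f` on a basis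
of `Λ_p(f)` and dividing by the largest power of `p` dividing all values. -/
def IsWatson (p : ℕ) (f g : TernaryQF) : Prop :=
  ∃ (B : Matrix (Fin 3) (Fin 3) ℤ) (k : ℕ),
    Set.range B.mulVec = Lam p f ∧
    (∀ v : Fin 3 → ℤ, f.evalVec (B.mulVec v) = (p : ℤ) ^ k * g.evalVec v) ∧
    ¬ ∀ v : Fin 3 → ℤ, (p : ℤ) ∣ g.evalVec v

/-- The order of the (finite, for positive definite forms) integral isometry group. -/
def autCount (f : TernaryQF) : ℕ :=
  Set.ncard {U : Matrix (Fin 3) (Fin 3) ℤ | IsUnit U.det ∧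
    (U.map ((↑) : ℤ → ℚ)).transpose * f.gram * U.map ((↑) : ℤ → ℚ) = f.gram}

end TernaryQF

open TernaryQF

/-!
Since `x² + xy + y² ≡ (x - y)² (mod 3)`, a representation of `n ≡ 1 (mod 3)` by
`ℓ_t = x² + xy + y² + 3t z²` has `x ≢ y (mod 3)`. Such representations therefore fall into exactly
one of three congruence classes mod 3: `3 ∣ y`, `3 ∣ x`, `3 ∣ x + y` (for `L_t`), `3 ∣ y - z`,
`3 ∣ x - z`, `3 ∣ x + y + z` (for `M_t`), or `3 ∣ z`, `3 ∣ x - y - z`, `3 ∣ x - y + z`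
(for `K_t` and `N_t`). Each of `L_t, M_t, N_t, K_t` is `ℓ_t` restricted to one of these index-3
sublattices, so its representations correspond bijectively to one class. The rotation
`(x, y, z) ↦ (-x - y, x, z)` of order three, an isometry of `ℓ_t`, permutes the classes of the first
two partitions cyclically, and `z ↦ -z` swaps the last two classes of the third.
-/

def ExactlyOneOfThree (p q r : Prop) : Prop :=
  (p ∨ q ∨ r) ∧ ¬(p ∧ q) ∧ ¬(p ∧ r) ∧ ¬(q ∧ r)

instance {p q r : Prop} [Decidable p] [Decidable q] [Decidable r] :
    Decidable (ExactlyOneOfThree p q r) :=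
  inferInstanceAs (Decidable ((p ∨ q ∨ r) ∧ _))

namespace Set

variable {α : Type*} {s : Set α}

theorem ncard_eq_add_add_of_exactlyOneOfThree (hs : s.Finite) {p q r : α → Prop}
    (h : ∀ a ∈ s, ExactlyOneOfThree (p a) (q a) (r a)) :
    s.ncard = {a ∈ s | p a}.ncard + {a ∈ s | q a}.ncard + {a ∈ s | r a}.ncard := by
  have hcover : s = {a ∈ s | p a} ∪ {a ∈ s | q a} ∪ {a ∈ s | r a} := by
    ext a
    simp only [mem_union, mem_sep_iff]
    constructor
    · intro ha
      have := (h a ha).1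
      tauto
    · tauto
  have hpq : Disjoint {a ∈ s | p a} {a ∈ s | q a} :=
    disjoint_left.2 fun a ⟨ha, hp⟩ ⟨_, hq⟩ => (h a ha).2.1 ⟨hp, hq⟩
  have hpr : Disjoint {a ∈ s | p a} {a ∈ s | r a} :=
    disjoint_left.2 fun a ⟨ha, hp⟩ ⟨_, hr⟩ => (h a ha).2.2.1 ⟨hp, hr⟩
  have hqr : Disjoint {a ∈ s | q a} {a ∈ s | r a} :=
    disjoint_left.2 fun a ⟨ha, hq⟩ ⟨_, hr⟩ => (h a ha).2.2.2 ⟨hq, hr⟩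
  nth_rw 1 [hcover]
  rw [ncard_union_eq (disjoint_union_left.2 ⟨hpr, hqr⟩) ((hs.sep _).union (hs.sep _))
    (hs.sep _), ncard_union_eq hpq (hs.sep _) (hs.sep _)]

theorem ncard_sep_comp_equiv (σ : α ≃ α) (hσ : ∀ a, σ a ∈ s ↔ a ∈ s) (p : α → Prop) :
    {a ∈ s | p (σ a)}.ncard = {a ∈ s | p a}.ncard := by
  have : {a ∈ s | p (σ a)} = σ ⁻¹' {a ∈ s | p a} := by
    ext a
    simp [hσ]
  rw [this, ncard_preimage_of_injective_subset_range σ.injective (by simp)]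

theorem ncard_eq_three_mul_of_equiv (hs : s.Finite) (σ : α ≃ α) (hσ : ∀ a, σ a ∈ s ↔ a ∈ s)
    {p : α → Prop} (h : ∀ a ∈ s, ExactlyOneOfThree (p a) (p (σ a)) (p (σ (σ a)))) :
    s.ncard = 3 * {a ∈ s | p a}.ncard := by
  rw [ncard_eq_add_add_of_exactlyOneOfThree hs h, ncard_sep_comp_equiv σ hσ fun a => p (σ a),
    ncard_sep_comp_equiv σ hσ p]
  ring

theorem ncard_eq_two_mul_add_of_equiv (hs : s.Finite) (σ : α ≃ α) (hσ : ∀ a, σ a ∈ s ↔ a ∈ s)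
    {p r : α → Prop} (h : ∀ a ∈ s, ExactlyOneOfThree (p a) (p (σ a)) (r a)) :
    s.ncard = 2 * {a ∈ s | p a}.ncard + {a ∈ s | r a}.ncard := by
  rw [ncard_eq_add_add_of_exactlyOneOfThree hs h, ncard_sep_comp_equiv σ hσ p]
  ring

end Set

theorem three_dvd_iff_intCast_zmod_eq_zero (a : ℤ) : 3 ∣ a ↔ (a : ZMod 3) = 0 := by
  simpa using (ZMod.intCast_zmod_eq_zero_iff_dvd a 3).symm

namespace TernaryQF

def reps (f : TernaryQF) (n : ℤ) : Set (Fin 3 → ℤ) := {v | f.evalVec v = n}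

theorem evalVec_mk (a b c d e g : ℤ) (v : Fin 3 → ℤ) :
    (mk a b c d e g).evalVec v = a * v 0 ^ 2 + b * v 1 ^ 2 + c * v 2 ^ 2 +
      d * (v 1 * v 2) + e * (v 2 * v 0) + g * (v 0 * v 1) := by
  simp [evalVec, eval, evalR]

theorem mem_reps_comp_iff {f : TernaryQF} {σ : (Fin 3 → ℤ) → Fin 3 → ℤ}
    (hσ : ∀ v, f.evalVec (σ v) = f.evalVec v) (n : ℤ) (v : Fin 3 → ℤ) :
    σ v ∈ f.reps n ↔ v ∈ f.reps n := by
  simp [reps, hσ]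

theorem r_eq_ncard_sep_of_comp {f g : TernaryQF} {T U : (Fin 3 → ℤ) → Fin 3 → ℤ}
    {P : (Fin 3 → ℤ) → Prop} (hfg : ∀ v, f.evalVec (T v) = g.evalVec v)
    (hUT : Function.LeftInverse U T) (hTU : ∀ w, P w → T (U w) = w) (hPT : ∀ v, P (T v))
    (n : ℤ) : g.r n = {v ∈ f.reps n | P v}.ncard := by
  have : {v ∈ f.reps n | P v} = T '' g.reps n := by
    ext w
    constructor
    · rintro ⟨hw, hPw⟩
      rw [← hTU w hPw] at hw ⊢
      exact ⟨U w, by simpa [reps, hfg] using hw, rfl⟩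
    · rintro ⟨v, hv, rfl⟩
      exact ⟨by simpa [reps, hfg] using hv, hPT v⟩
  rw [this, Set.ncard_image_of_injective _ hUT.injective]
  rfl

theorem finite_reps_ell {s : ℤ} (hs : 0 < s) (n : ℤ) :
    ((mk 1 1 (3 * s) 0 0 1).reps n).Finite := by
  refine (Set.finite_Icc (fun _ => -n) (fun _ => n)).subset fun v hv => ?_
  simp only [reps, evalVec_mk, Set.mem_ofPred_eq] at hv
  have hz : 0 ≤ (s - 1) * v 2 ^ 2 := mul_nonneg (by linarith) (sq_nonneg _)
  have h0 : -n ≤ v 0 ∧ v 0 ≤ n := by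
    constructor <;> nlinarith [sq_nonneg (v 0 + v 1), sq_nonneg (v 1), sq_nonneg (v 2),
      sq_nonneg (v 0 + n), sq_nonneg (v 0 - n)]
  have h1 : -n ≤ v 1 ∧ v 1 ≤ n := by
    constructor <;> nlinarith [sq_nonneg (v 0 + v 1), sq_nonneg (v 0), sq_nonneg (v 2),
      sq_nonneg (v 1 + n), sq_nonneg (v 1 - n)]
  have h2 : -n ≤ v 2 ∧ v 2 ≤ n := by
    constructor <;> nlinarith [sq_nonneg (2 * v 0 + v 1), sq_nonneg (v 1),
      sq_nonneg (v 2 + n), sq_nonneg (v 2 - n), sq_nonneg (v 2)]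
  constructor <;> intro i <;> fin_cases i <;> simp <;> omega

theorem sq_add_mul_add_sq_eq_one_of_mem_reps_ell {s n : ℤ} (hn : (n : ZMod 3) = 1)
    {v : Fin 3 → ℤ} (hv : v ∈ (mk 1 1 (3 * s) 0 0 1).reps n) :
    (v 0 : ZMod 3) ^ 2 + v 0 * v 1 + v 1 ^ 2 = 1 := by
  have h := congrArg (Int.cast : ℤ → ZMod 3) hv
  simp only [evalVec_mk] at h
  push_cast at h
  rw [hn, show (3 : ZMod 3) = 0 from rfl] at h
  linear_combination h

@[simps]
def hexRotation : (Fin 3 → ℤ) ≃ (Fin 3 → ℤ) where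
  toFun v := ![-v 0 - v 1, v 0, v 2]
  invFun v := ![v 1, -v 0 - v 1, v 2]
  left_inv v := by ext i; fin_cases i <;> simp
  right_inv v := by ext i; fin_cases i <;> simp [sub_eq_add_neg]

@[simps]
def negThird : (Fin 3 → ℤ) ≃ (Fin 3 → ℤ) where
  toFun v := ![v 0, v 1, -v 2]
  invFun v := ![v 0, v 1, -v 2]
  left_inv v := by ext i; fin_cases i <;> simp
  right_inv v := by ext i; fin_cases i <;> simp

theorem evalVec_ell_hexRotation (s : ℤ) (v : Fin 3 → ℤ) :
    (mk 1 1 (3 * s) 0 0 1).evalVec (hexRotation v) = (mk 1 1 (3 * s) 0 0 1).evalVec v := by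
  simp [evalVec_mk]
  ring

theorem evalVec_ell_negThird (s : ℤ) (v : Fin 3 → ℤ) :
    (mk 1 1 (3 * s) 0 0 1).evalVec (negThird v) = (mk 1 1 (3 * s) 0 0 1).evalVec v := by
  simp [evalVec_mk]

variable {s n : ℤ}

theorem r_ell_eq_three_mul_r_L (hs : 0 < s) (hn : (n : ZMod 3) = 1) :
    (mk 1 1 (3 * s) 0 0 1).r n = 3 * (mk 1 7 (3 * s) 0 0 1).r n := by
  have hL : (mk 1 7 (3 * s) 0 0 1).r n = {v ∈ (mk 1 1 (3 * s) 0 0 1).reps n | 3 ∣ v 1}.ncard :=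
    r_eq_ncard_sep_of_comp (T := fun v => ![v 0 - v 1, 3 * v 1, v 2])
      (U := fun w => ![w 0 + w 1 / 3, w 1 / 3, w 2])
      (fun v => by simp [evalVec_mk]; ring) (fun v => by ext i; fin_cases i <;> simp)
      (fun w hw => by ext i; fin_cases i <;> simp [Int.mul_ediv_cancel' hw]) (fun v => by simp) n
  rw [hL]
  refine Set.ncard_eq_three_mul_of_equiv (finite_reps_ell hs n) hexRotation
    (mem_reps_comp_iff (evalVec_ell_hexRotation s) n) fun v hv => ?_
  have key : ∀ x y : ZMod 3, x ^ 2 + x * y + y ^ 2 = 1 →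
      ExactlyOneOfThree (y = 0) (x = 0) (-x - y = 0) := by
    decide
  simpa [three_dvd_iff_intCast_zmod_eq_zero] using
    key _ _ (sq_add_mul_add_sq_eq_one_of_mem_reps_ell hn hv)

theorem r_ell_eq_three_mul_r_M (hs : 0 < s) (hn : (n : ZMod 3) = 1) :
    (mk 1 1 (3 * s) 0 0 1).r n = 3 * (mk 1 7 (3 * s + 1) 5 1 1).r n := by
  have hM : (mk 1 7 (3 * s + 1) 5 1 1).r n =
      {v ∈ (mk 1 1 (3 * s) 0 0 1).reps n | 3 ∣ v 1 - v 2}.ncard :=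
    r_eq_ncard_sep_of_comp (T := fun v => ![-v 0 - 2 * v 1 - v 2, 3 * v 1 + v 2, v 2])
      (U := fun w => ![-w 0 - 2 * ((w 1 - w 2) / 3) - w 2, (w 1 - w 2) / 3, w 2])
      (fun v => by simp [evalVec_mk]; ring) (fun v => by ext i; fin_cases i <;> simp; omega)
      (fun w hw => by ext i; fin_cases i <;> simp <;> omega) (fun v => by simp) n
  rw [hM]
  refine Set.ncard_eq_three_mul_of_equiv (finite_reps_ell hs n) hexRotation
    (mem_reps_comp_iff (evalVec_ell_hexRotation s) n) fun v hv => ?_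
  have key : ∀ x y z : ZMod 3, x ^ 2 + x * y + y ^ 2 = 1 →
      ExactlyOneOfThree (y - z = 0) (x - z = 0) (-x - y - z = 0) := by
    decide
  simpa [three_dvd_iff_intCast_zmod_eq_zero] using
    key _ _ (v 2) (sq_add_mul_add_sq_eq_one_of_mem_reps_ell hn hv)

theorem r_ell_eq_two_mul_r_N_add_r_K (hs : 0 < s) (hn : (n : ZMod 3) = 1) :
    (mk 1 1 (3 * s) 0 0 1).r n =
      2 * (mk 3 3 (3 * s + 1) 3 0 3).r n + (mk 1 1 (27 * s) 0 0 1).r n := by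
  have hN : (mk 3 3 (3 * s + 1) 3 0 3).r n =
      {v ∈ (mk 1 1 (3 * s) 0 0 1).reps n | 3 ∣ v 0 - v 1 - v 2}.ncard :=
    r_eq_ncard_sep_of_comp (T := fun v => ![-2 * v 0 - v 1, v 0 - v 1 - v 2, v 2])
      (U := fun w => ![-((w 0 - w 1 - w 2) / 3), -w 0 + 2 * ((w 0 - w 1 - w 2) / 3), w 2])
      (fun v => by simp [evalVec_mk]; ring) (fun v => by ext i; fin_cases i <;> simp <;> omega)
      (fun w hw => by ext i; fin_cases i <;> simp; omega) (fun v => ⟨-v 0, by simp; ring⟩) n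
  have hK : (mk 1 1 (27 * s) 0 0 1).r n =
      {v ∈ (mk 1 1 (3 * s) 0 0 1).reps n | 3 ∣ v 2}.ncard :=
    r_eq_ncard_sep_of_comp (T := fun v => ![v 0, v 1, 3 * v 2])
      (U := fun w => ![w 0, w 1, w 2 / 3])
      (fun v => by simp [evalVec_mk]; ring) (fun v => by ext i; fin_cases i <;> simp)
      (fun w hw => by ext i; fin_cases i <;> simp [Int.mul_ediv_cancel' hw]) (fun v => by simp) n
  rw [hN, hK]
  refine Set.ncard_eq_two_mul_add_of_equiv (finite_reps_ell hs n) negThird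
    (mem_reps_comp_iff (evalVec_ell_negThird s) n) fun v hv => ?_
  have key : ∀ x y z : ZMod 3, x ^ 2 + x * y + y ^ 2 = 1 →
      ExactlyOneOfThree (x - y - z = 0) (x - y + z = 0) (z = 0) := by
    decide
  simpa [three_dvd_iff_intCast_zmod_eq_zero] using
    key _ _ (v 2) (sq_add_mul_add_sq_eq_one_of_mem_reps_ell hn hv)

end TernaryQF

theorem stmt17_general (t : ℕ) (ht : 0 < t) (n : ℕ) :
    (TernaryQF.mk 1 1 (3 * t) 0 0 1).r (3 * (n : ℤ) + 1) =
        3 * (TernaryQF.mk 1 7 (3 * t) 0 0 1).r (3 * (n : ℤ) + 1) ∧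
    (TernaryQF.mk 1 1 (3 * t) 0 0 1).r (3 * (n : ℤ) + 1) =
        3 * (TernaryQF.mk 1 7 (3 * t + 1) 5 1 1).r (3 * (n : ℤ) + 1) ∧
    (TernaryQF.mk 1 1 (3 * t) 0 0 1).r (3 * (n : ℤ) + 1) =
        2 * (TernaryQF.mk 3 3 (3 * t + 1) 3 0 3).r (3 * (n : ℤ) + 1) +
          (TernaryQF.mk 1 1 (27 * t) 0 0 1).r (3 * (n : ℤ) + 1) := by
  have hs : (0 : ℤ) < t := by exact_mod_cast ht
  have hn : ((3 * (n : ℤ) + 1 : ℤ) : ZMod 3) = 1 := by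
    simp [show (3 : ZMod 3) = 0 from rfl]
  exact ⟨r_ell_eq_three_mul_r_L hs hn, r_ell_eq_three_mul_r_M hs hn,
    r_ell_eq_two_mul_r_N_add_r_K hs hn⟩

/-- `r(3n+1, ℓ_t) = 3r(3n+1, L_t) = 3r(3n+1, M_t) = 2r(3n+1, N_t) + r(3n+1, K_t)`. -/
theorem stmt17 (t : ℕ) (ht : 0 < t) (n : ℕ) (hn : 0 < n) :
    (TernaryQF.mk 1 1 (3 * t) 0 0 1).r (3 * (n : ℤ) + 1) =
        3 * (TernaryQF.mk 1 7 (3 * t) 0 0 1).r (3 * (n : ℤ) + 1) ∧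
    (TernaryQF.mk 1 1 (3 * t) 0 0 1).r (3 * (n : ℤ) + 1) =
        3 * (TernaryQF.mk 1 7 (3 * t + 1) 5 1 1).r (3 * (n : ℤ) + 1) ∧
    (TernaryQF.mk 1 1 (3 * t) 0 0 1).r (3 * (n : ℤ) + 1) =
        2 * (TernaryQF.mk 3 3 (3 * t + 1) 3 0 3).r (3 * (n : ℤ) + 1) +
          (TernaryQF.mk 1 1 (27 * t) 0 0 1).r (3 * (n : ℤ) + 1) :=
  stmt17_general t ht n
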